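/- arXiv:0906.0545 — 2 statements merged into one kernel-verified Lean document; each statement's English description precedes it below -/
import Mathlib

section
/- For all positive integers f, q, setting e = f+q, and every natural number k, the identity ∑_{i=0}^{k} i(k−i) · C(f−1+i, f−1) · C(q−1+k−i, q−1) = f·q · C(e+k−1, e+1) holds, where C(a,b) denotes the binomial coefficient. -/
/-!
Absorption, `i * C(a + i, a) = (a + 1) * C(a + i, a + 1)`, pulls the factors `i` and `k - i` out
of the summand as `f * q`. What remains is a convolution of two columns of Pascal's triangle;
since `∑ₙ C(a + n, a) Xⁿ = (1 - X)⁻⁽ᵃ⁺¹⁾`, such convolutions are again binomial coefficients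
(the upper Vandermonde identity), and the shift by one in each factor contributes `X²`.
-/

open Finset PowerSeries

theorem mul_add_choose_eq (a i : ℕ) : i * (a + i).choose a = (a + 1) * (a + i).choose (a + 1) := by
  have h := Nat.choose_succ_right_eq (a + i) a
  rw [Nat.add_sub_cancel_left] at h
  linarith

theorem sum_antidiagonal_add_choose_mul_add_choose (a b n : ℕ) :
    ∑ p ∈ antidiagonal n, (a + p.1).choose a * (b + p.2).choose b
      = (a + b + 1 + n).choose (a + b + 1) := by
  have h := congrArg (fun F : ℤ⟦X⟧ ↦ coeff n F)
    (congrArg Units.val (invOneSubPow_add ℤ (a + 1) (b + 1)))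
  rw [show a + 1 + (b + 1) = a + b + 1 + 1 by ring] at h
  simp only [Units.val_mul, coeff_mul, invOneSubPow_val_succ_eq_mk_add_choose, coeff_mk] at h
  exact_mod_cast h.symm

theorem sum_antidiagonal_add_choose_succ_mul_add_choose_succ (a b n : ℕ) :
    ∑ p ∈ antidiagonal n, (a + p.1).choose (a + 1) * (b + p.2).choose (b + 1)
      = (a + b + n + 1).choose (a + b + 3) := by
  rcases n with _ | _ | m
  · simp [Nat.choose_eq_zero_of_lt]
  · simp [Nat.sum_antidiagonal_succ]
  · rw [Nat.sum_antidiagonal_succ, Nat.sum_antidiagonal_succ']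
    simp only [Nat.choose_eq_zero_of_lt (Nat.lt_succ_self _), add_zero, zero_add, mul_zero, zero_mul]
    rw [show a + b + (m + 1 + 1) + 1 = a + 1 + (b + 1) + 1 + m by ring,
      show a + b + 3 = a + 1 + (b + 1) + 1 by ring,
      ← sum_antidiagonal_add_choose_mul_add_choose (a + 1) (b + 1) m]
    simp only [add_assoc, add_comm 1]

/-- For positive integers `f`, `q`, with `e = f+q`, and any `k`,
`∑_{i=0}^{k} i(k−i) · C(f−1+i, f−1) · C(q−1+k−i, q−1) = f·q·C(e+k−1, e+1)`. -/
theorem koszul_absorption_mixed_moment (f q : ℕ) (hf : 0 < f) (hq : 0 < q) (k : ℕ) :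
    ∑ i ∈ Finset.range (k + 1),
        i * (k - i) * Nat.choose (f - 1 + i) (f - 1) * Nat.choose (q - 1 + k - i) (q - 1)
      = f * q * Nat.choose (f + q + k - 1) (f + q + 1) := by
  obtain ⟨a, rfl⟩ : ∃ a, f = a + 1 := ⟨f - 1, by omega⟩
  obtain ⟨b, rfl⟩ : ∃ b, q = b + 1 := ⟨q - 1, by omega⟩
  simp only [Nat.add_sub_cancel]
  calc ∑ i ∈ range (k + 1), i * (k - i) * (a + i).choose a * (b + k - i).choose b
      = ∑ i ∈ range (k + 1),
          (a + 1) * (b + 1) * ((a + i).choose (a + 1) * (b + (k - i)).choose (b + 1)) := by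
        refine sum_congr rfl fun i hi ↦ ?_
        rw [Nat.add_sub_assoc (mem_range_succ_iff.mp hi)]
        calc i * (k - i) * (a + i).choose a * (b + (k - i)).choose b
            = (i * (a + i).choose a) * ((k - i) * (b + (k - i)).choose b) := by ring
          _ = _ := by rw [mul_add_choose_eq, mul_add_choose_eq]; ring
    _ = (a + 1) * (b + 1) * (a + b + k + 1).choose (a + b + 3) := by
        rw [← mul_sum, ← sum_antidiagonal_add_choose_succ_mul_add_choose_succ,
          Nat.sum_antidiagonal_eq_sum_range_succ
            (fun i j ↦ (a + i).choose (a + 1) * (b + j).choose (b + 1))]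
    _ = (a + 1) * (b + 1) * (a + 1 + (b + 1) + k - 1).choose (a + 1 + (b + 1) + 1) := by
        congr 2 <;> omega
end

section
/- Let f, q, r be positive integers with r ≤ f + q − 1, set e = f + q, let d_F, d_Q be integers and g a rational number, and set μ_F = d_F/f, μ_Q = d_Q/q, μ_E = (d_F + d_Q)/e. Let m_1, …, m_r be positive integers, H(x) := (1/(e−1)!)·∏_{j=1}^{e−1}(x+j)·(−μ_E·x + 1 − g), B_m(x) := (1/m!)·∏_{j=0}^{m−1}(x+e−1−j), and T(x) := (f(f+1)μ_F + f·q·μ_Q)·B_{e+1}(x) + (μ_F − (1−g))·f·B_e(x). Then the polynomial Tr_X := ∑_{S ⊆ {1,…,r}} (−1)^{|S|} ( T(x − σ_S) − σ_S · H(x − σ_S) ), where σ_S = ∑_{i∈S} m_i, has degree ≤ e − r + 1 and its coefficient of x^{e−r+1} equals (∏_{i=1}^{r} m_i) · (d_F + (f−r)(d_F + d_Q))/(e+1−r)!. -/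
/-!
Write `τ_a F = F(X - a)`, so that `iterDiff c s = ∏_{i ∈ s} (1 - τ_{c i})`. The alternating
sum over subsets is `Δ(T + X·H) - X·Δ(H)` with `Δ = iterDiff m univ`. By Taylor expansion,
`1 - τ_a` sends a polynomial of degree `≤ n + 1` to one of degree `≤ n` whose coefficient of
`X^n` is `(n + 1)·a` times the old top coefficient; hence `Δ` lowers degrees by `r` and
multiplies the coefficient of `X^N` by `(∏ mᵢ)·N(N-1)⋯(N-r+1)`. As `T` has degree `e + 1` with
top coefficient `((f + 1)d_F + f d_Q)/(e + 1)!` and `H` has degree `e` with top coefficient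
`-(d_F + d_Q)/e!`, what remains is an identity between factorials.
-/

open Polynomial

namespace Polynomial

variable {R : Type*} [CommRing R]

theorem coeff_taylor_of_natDegree_le {F : R[X]} {n : ℕ} (hF : F.natDegree ≤ n) (r : R) :
    (taylor r F).coeff n = F.coeff n := by
  have hconst : (hasseDeriv n F).natDegree = 0 := by
    have := natDegree_hasseDeriv_le F n
    omega
  rw [taylor_coeff, eq_C_of_natDegree_eq_zero hconst, eval_C, hasseDeriv_coeff]
  simp

theorem coeff_taylor_of_natDegree_le_succ {F : R[X]} {n : ℕ} (hF : F.natDegree ≤ n + 1)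
    (r : R) :
    (taylor r F).coeff n = F.coeff n + (n + 1) * r * F.coeff (n + 1) := by
  have hlin : (hasseDeriv n F).natDegree < 2 := by
    have := natDegree_hasseDeriv_le F n
    omega
  rw [taylor_coeff, eval_eq_sum_range' hlin, Finset.sum_range_succ, Finset.sum_range_one]
  simp only [hasseDeriv_coeff, zero_add, Nat.choose_self, add_comm 1 n, Nat.choose_succ_self_right]
  push_cast
  ring

theorem comp_X_sub_C_eq_taylor (F : R[X]) (c : R) : F.comp (X - C c) = taylor (-c) F := by
  rw [taylor_apply, map_neg, sub_eq_add_neg]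

theorem natDegree_sub_comp_X_sub_C_le {F : R[X]} {n : ℕ} (hF : F.natDegree ≤ n + 1) (c : R) :
    (F - F.comp (X - C c)).natDegree ≤ n := by
  rw [natDegree_le_iff_coeff_eq_zero, comp_X_sub_C_eq_taylor]
  intro N hN
  rcases (Nat.succ_le_of_lt hN).eq_or_lt with rfl | hlt
  · rw [coeff_sub, coeff_taylor_of_natDegree_le hF, sub_self]
  · have hF' : (taylor (-c) F).natDegree < N := (natDegree_taylor F _).trans_lt (hF.trans_lt hlt)
    rw [coeff_sub, coeff_eq_zero_of_natDegree_lt (hF.trans_lt hlt),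
      coeff_eq_zero_of_natDegree_lt hF', sub_zero]

theorem coeff_sub_comp_X_sub_C {F : R[X]} {n : ℕ} (hF : F.natDegree ≤ n + 1) (c : R) :
    (F - F.comp (X - C c)).coeff n = (n + 1) * c * F.coeff (n + 1) := by
  rw [comp_X_sub_C_eq_taylor, coeff_sub, coeff_taylor_of_natDegree_le_succ hF]
  ring

theorem natDegree_add_X_mul_le {T H : R[X]} {n : ℕ} (hT : T.natDegree ≤ n + 1)
    (hH : H.natDegree ≤ n) : (T + X * H).natDegree ≤ n + 1 :=
  (natDegree_add_le _ _).trans <| max_le hT <|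
    natDegree_mul_le.trans (by have := natDegree_X_le (R := R); omega)

noncomputable def iterDiff {ι : Type*} (c : ι → R) (s : Finset ι) (F : R[X]) : R[X] :=
  ∑ S ∈ s.powerset, (-1) ^ S.card * F.comp (X - C (∑ i ∈ S, c i))

section iterDiff

variable {ι : Type*} (c : ι → R)

theorem sum_powerset_sub_C_mul_comp_eq_iterDiff (s : Finset ι) (T H : R[X]) :
    ∑ S ∈ s.powerset, (-1) ^ S.card * (T.comp (X - C (∑ i ∈ S, c i))
        - C (∑ i ∈ S, c i) * H.comp (X - C (∑ i ∈ S, c i)))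
      = iterDiff c s (T + X * H) - X * iterDiff c s H := by
  rw [iterDiff, iterDiff, Finset.mul_sum, ← Finset.sum_sub_distrib]
  refine Finset.sum_congr rfl fun S _ => ?_
  rw [add_comp, mul_comp, X_comp]
  ring

variable [DecidableEq ι]

theorem iterDiff_insert {a : ι} {s : Finset ι} (ha : a ∉ s) (F : R[X]) :
    iterDiff c (insert a s) F = iterDiff c s (F - F.comp (X - C (c a))) := by
  rw [iterDiff, iterDiff, Finset.sum_powerset_insert ha, ← Finset.sum_add_distrib]
  refine Finset.sum_congr rfl fun S hS => ?_
  have haS : a ∉ S := fun h => ha (Finset.mem_powerset.mp hS h)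
  have hshift :
      X - C (∑ i ∈ insert a S, c i) = (X - C (c a)).comp (X - C (∑ i ∈ S, c i)) := by
    rw [Finset.sum_insert haS, sub_comp, X_comp, C_comp, C_add]
    ring
  rw [Finset.card_insert_of_notMem haS, hshift, ← comp_assoc, sub_comp, pow_succ]
  ring

theorem natDegree_iterDiff_le {s : Finset ι} {n : ℕ} {F : R[X]}
    (hF : F.natDegree ≤ n + s.card) :
    (iterDiff c s F).natDegree ≤ n := by
  induction s using Finset.induction_on generalizing F with
  | empty => simpa [iterDiff] using hF
  | insert a s ha ih =>
    rw [iterDiff_insert c ha]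
    rw [Finset.card_insert_of_notMem ha, ← add_assoc] at hF
    exact ih (natDegree_sub_comp_X_sub_C_le hF _)

theorem coeff_iterDiff {s : Finset ι} {n : ℕ} {F : R[X]} (hF : F.natDegree ≤ n + s.card) :
    (iterDiff c s F).coeff n
      = (n + s.card).descFactorial s.card * (∏ i ∈ s, c i) * F.coeff (n + s.card) := by
  induction s using Finset.induction_on generalizing F with
  | empty => simp [iterDiff]
  | insert a s ha ih =>
    rw [Finset.card_insert_of_notMem ha, ← add_assoc] at hF ⊢
    rw [iterDiff_insert c ha, ih (natDegree_sub_comp_X_sub_C_le hF _),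
      coeff_sub_comp_X_sub_C hF, Finset.prod_insert ha, Nat.succ_descFactorial_succ]
    push_cast
    ring

theorem natDegree_iterDiff_add_X_mul_sub_le {s : Finset ι} {N : ℕ} (hs : s.card ≤ N)
    {T H : R[X]}     (hT : T.natDegree ≤ N + 1) (hH : H.natDegree ≤ N) :
    (iterDiff c s (T + X * H) - X * iterDiff c s H).natDegree ≤ N - s.card + 1 := by
  obtain ⟨n, rfl⟩ := Nat.exists_eq_add_of_le' hs
  rw [Nat.add_sub_cancel]
  refine (natDegree_sub_le _ _).trans (max_le ?_ ?_)
  · exact natDegree_iterDiff_le c (add_right_comm n _ 1 ▸ natDegree_add_X_mul_le hT hH)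
  · have := natDegree_iterDiff_le c hH
    exact natDegree_mul_le.trans (by have := natDegree_X_le (R := R); omega)

theorem coeff_iterDiff_add_X_mul_sub {s : Finset ι} {N : ℕ} (hs : s.card ≤ N)
    {T H : R[X]}     (hT : T.natDegree ≤ N + 1) (hH : H.natDegree ≤ N) :
    (iterDiff c s (T + X * H) - X * iterDiff c s H).coeff (N - s.card + 1)
      = (∏ i ∈ s, c i) * ((N + 1).descFactorial s.card * (T.coeff (N + 1) + H.coeff N)
        - N.descFactorial s.card * H.coeff N) := by
  obtain ⟨n, rfl⟩ := Nat.exists_eq_add_of_le' hs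
  rw [Nat.add_sub_cancel, coeff_sub, coeff_X_mul,
    coeff_iterDiff c (add_right_comm n _ 1 ▸ natDegree_add_X_mul_le hT hH),
    coeff_iterDiff c hH, coeff_add, add_right_comm n 1, coeff_X_mul]
  ring

end iterDiff

theorem natDegree_C_mul_prod_X_add_C_le {ι : Type*} (a : R) (b : ι → R) (s : Finset ι) :
    (C a * ∏ j ∈ s, (X + C (b j))).natDegree ≤ s.card :=
  (natDegree_C_mul_le _ _).trans <| (natDegree_prod_le _ _).trans <| by
    simpa using Finset.sum_le_sum fun j (_ : j ∈ s) => natDegree_X_le (R := R)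

theorem coeff_C_mul_prod_X_add_C {ι : Type*} (a : R) (b : ι → R) (s : Finset ι) :
    (C a * ∏ j ∈ s, (X + C (b j))).coeff s.card = a := by
  have h := coeff_prod_of_natDegree_le s (fun j => X + C (b j)) 1 fun j _ => by
    simpa using natDegree_X_le (R := R)
  rw [mul_one] at h
  simp [coeff_C_mul, h]

theorem natDegree_mul_linear_le {P : R[X]} {n : ℕ} (hP : P.natDegree ≤ n) (u v : R) :
    (P * (C u * X + C v)).natDegree ≤ n + 1 :=
  natDegree_mul_le.trans (add_le_add hP natDegree_linear_le)

theorem coeff_mul_linear_succ {P : R[X]} {n : ℕ} (hP : P.natDegree ≤ n) (u v : R) :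
    (P * (C u * X + C v)).coeff (n + 1) = P.coeff n * u := by
  rw [coeff_mul_add_eq_of_natDegree_le hP natDegree_linear_le]
  simp

end Polynomial

section Factorial

open Nat

theorem Nat.add_descFactorial_mul_factorial (n k : ℕ) :
    (n + k).descFactorial k * n ! = (n + k)! := by
  rw [add_descFactorial_eq_ascFactorial, mul_comm, factorial_mul_ascFactorial]

theorem Nat.cast_add_descFactorial_eq_div {K : Type*} [Field K] [CharZero K] (n k : ℕ) :
    ((n + k).descFactorial k : K) = (n + k)! / n ! := by
  rw [eq_div_iff (Nat.cast_ne_zero.mpr n.factorial_ne_zero)]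
  exact_mod_cast Nat.add_descFactorial_mul_factorial n k

theorem descFactorial_succ_mul_sub_add_descFactorial_mul {K : Type*} [Field K] [CharZero K]
    {N k : ℕ} (hk : k ≤ N) (a b : K) :
    ((N + 1).descFactorial k : K) * (a / (N + 1)! - b / N !) + N.descFactorial k * (b / N !)
      = (a - k * b) / (N + 1 - k)! := by
  obtain ⟨n, rfl⟩ := Nat.exists_eq_add_of_le' hk
  have hn : (n ! : K) ≠ 0 := Nat.cast_ne_zero.mpr n.factorial_ne_zero
  have hnk : ((n + k)! : K) ≠ 0 := Nat.cast_ne_zero.mpr (n + k).factorial_ne_zero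
  have hnk1 : (n + k + 1 : K) ≠ 0 := by exact_mod_cast (n + k).succ_ne_zero
  have hn1 : (n + 1 : K) ≠ 0 := by exact_mod_cast n.succ_ne_zero
  rw [add_right_comm, Nat.cast_add_descFactorial_eq_div, Nat.cast_add_descFactorial_eq_div,
    Nat.add_sub_cancel, add_right_comm n 1 k, factorial_succ (n + k), factorial_succ n]
  push_cast
  field_simp
  ring

end Factorial

section WeightPolynomials

open Nat Finset

/- `binomialPoly e n` is the paper's `B_n = binom(X + e - 1, n)`, and `h0Poly e μ_E (1 - g)` is
its `H`. -/
noncomputable def binomialPoly (e n : ℕ) : ℚ[X] :=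
  C (1 / (n ! : ℚ)) * ∏ j ∈ range n, (X + C ((e : ℚ) - 1 - j))

noncomputable def h0Poly (e : ℕ) (μ γ : ℚ) : ℚ[X] :=
  C (1 / ((e - 1)! : ℚ)) * (∏ j ∈ range (e - 1), (X + C ((j : ℚ) + 1)))
    * (-(C μ) * X + C γ)

theorem natDegree_binomialPoly_le (e n : ℕ) : (binomialPoly e n).natDegree ≤ n := by
  rw [binomialPoly]
  simpa only [card_range] using natDegree_C_mul_prod_X_add_C_le (R := ℚ) _ _ (range n)

theorem coeff_binomialPoly (e n : ℕ) : (binomialPoly e n).coeff n = 1 / n ! := by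
  rw [binomialPoly]
  simpa only [card_range] using coeff_C_mul_prod_X_add_C (R := ℚ) _ _ (range n)

theorem natDegree_h0Poly_le {e : ℕ} (he : e ≠ 0) (μ γ : ℚ) :
    (h0Poly e μ γ).natDegree ≤ e := by
  have hP := natDegree_C_mul_prod_X_add_C_le (1 / ((e - 1)! : ℚ)) (fun j : ℕ => (j : ℚ) + 1)
    (range (e - 1))
  rw [card_range] at hP
  have h := natDegree_mul_linear_le hP (-μ) γ
  rwa [C_neg, Nat.sub_add_cancel (one_le_iff_ne_zero.mpr he)] at h

theorem coeff_h0Poly {e : ℕ} (he : e ≠ 0) (μ γ : ℚ) :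
    (h0Poly e μ γ).coeff e = -(μ * e) / e ! := by
  have hP := natDegree_C_mul_prod_X_add_C_le (1 / ((e - 1)! : ℚ)) (fun j : ℕ => (j : ℚ) + 1)
    (range (e - 1))
  have hPcoeff := coeff_C_mul_prod_X_add_C (1 / ((e - 1)! : ℚ)) (fun j : ℕ => (j : ℚ) + 1)
    (range (e - 1))
  rw [card_range] at hP hPcoeff
  have h := coeff_mul_linear_succ hP (-μ) γ
  rw [C_neg, Nat.sub_add_cancel (one_le_iff_ne_zero.mpr he), hPcoeff] at h
  rw [h0Poly, h, ← Nat.mul_factorial_pred he]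
  push_cast
  field_simp

end WeightPolynomials

theorem complete_intersection_weight_leading_coeff_general (f q r : ℕ) (hf : 0 < f) (hq : 0 < q)
    (hre : r ≤ f + q - 1) (e : ℕ) (he : e = f + q)
    (dF dQ : ℤ) (g : ℚ) (m : Fin r → ℕ) :
    let μF : ℚ := (dF : ℚ) / (f : ℚ)
    let μQ : ℚ := (dQ : ℚ) / (q : ℚ)
    let μE : ℚ := ((dF : ℚ) + (dQ : ℚ)) / (e : ℚ)
    let H : Polynomial ℚ :=
      C (1 / ((e - 1).factorial : ℚ)) *
        (∏ j ∈ Finset.range (e - 1), (X + C ((j : ℚ) + 1))) *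
        (-(C μE) * X + C (1 - g))
    let B : ℕ → Polynomial ℚ := fun n =>
      C (1 / (n.factorial : ℚ)) * ∏ j ∈ Finset.range n, (X + C ((e : ℚ) - 1 - (j : ℚ)))
    let T : Polynomial ℚ :=
      C ((f : ℚ) * ((f : ℚ) + 1) * μF + (f : ℚ) * (q : ℚ) * μQ) * B (e + 1)
        + C ((μF - (1 - g)) * (f : ℚ)) * B e
    let TrX : Polynomial ℚ :=
      ∑ S : Finset (Fin r), (-1 : Polynomial ℚ) ^ S.card *
        (T.comp (X - C ((∑ i ∈ S, m i : ℕ) : ℚ))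
          - C ((∑ i ∈ S, m i : ℕ) : ℚ) * H.comp (X - C ((∑ i ∈ S, m i : ℕ) : ℚ)))
    TrX.degree ≤ ((e - r + 1 : ℕ) : WithBot ℕ) ∧
    TrX.coeff (e - r + 1)
      = (∏ i, (m i : ℚ)) * ((dF : ℚ) + ((f : ℚ) - (r : ℚ)) * ((dF : ℚ) + (dQ : ℚ)))
          / ((e + 1 - r).factorial : ℚ) := by
  intro μF μQ μE H B T TrX
  have hf0 : (f : ℚ) ≠ 0 := by positivity
  have hq0 : (q : ℚ) ≠ 0 := by positivity
  have he0 : e ≠ 0 := by omega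
  have hre' : r ≤ e := by omega
  have hB (n : ℕ) : B n = binomialPoly e n := rfl
  have hTdeg : T.natDegree ≤ e + 1 := by
    refine (natDegree_add_le _ _).trans (max_le ?_ ?_) <;> refine (natDegree_C_mul_le _ _).trans ?_
    · exact natDegree_binomialPoly_le e (e + 1)
    · exact (natDegree_binomialPoly_le e e).trans e.le_succ
  have hTcoeff : T.coeff (e + 1) = ((f + 1) * dF + f * dQ) / (e + 1).factorial := by
    simp only [T, hB, coeff_add, coeff_C_mul, coeff_binomialPoly, μF, μQ]
    rw [coeff_eq_zero_of_natDegree_lt ((natDegree_binomialPoly_le e e).trans_lt e.lt_succ_self)]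
    field_simp
    ring
  have hHdeg : H.natDegree ≤ e := natDegree_h0Poly_le he0 _ _
  have hHcoeff : H.coeff e = -(dF + dQ) / e.factorial := by
    rw [show H = h0Poly e μE (1 - g) from rfl, coeff_h0Poly he0]
    simp only [μE]
    field_simp
  have hTrX : TrX = iterDiff (fun i => (m i : ℚ)) Finset.univ (T + X * H)
      - X * iterDiff (fun i => (m i : ℚ)) Finset.univ H := by
    rw [← sum_powerset_sub_C_mul_comp_eq_iterDiff, Finset.powerset_univ]
    simp only [TrX, Nat.cast_sum]
  have hdeg := natDegree_iterDiff_add_X_mul_sub_le (fun i => (m i : ℚ))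
    (Finset.card_fin r ▸ hre') hTdeg hHdeg
  have hcoeff := coeff_iterDiff_add_X_mul_sub (fun i => (m i : ℚ))
    (Finset.card_fin r ▸ hre') hTdeg hHdeg
  rw [Finset.card_fin, ← hTrX] at hdeg hcoeff
  refine ⟨natDegree_le_iff_degree_le.mp hdeg, ?_⟩
  rw [hcoeff, hTcoeff, hHcoeff]
  linear_combination (∏ i, (m i : ℚ)) *
    descFactorial_succ_mul_sub_add_descFactorial_mul (K := ℚ) hre' ((f + 1) * dF + f * dQ) (dF + dQ)

/-- The total-weight polynomial of the complete intersection,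
`Tr_X = ∑_{S⊆{1,…,r}} (−1)^{|S|}(T(x−σ_S) − σ_S·H(x−σ_S))`, has degree ≤ `e−r+1` with
coefficient of `x^{e−r+1}` equal to `(∏ m_i)·(d_F + (f−r)(d_F+d_Q))/(e+1−r)!`
(the coefficient `a₀` of the paper); here `e = f+q`, `μ_F = d_F/f`, `μ_Q = d_Q/q`,
`μ_E = (d_F+d_Q)/e`. -/
theorem complete_intersection_weight_leading_coeff (f q r : ℕ) (hf : 0 < f) (hq : 0 < q)
    (hr : 0 < r) (hre : r ≤ f + q - 1) (e : ℕ) (he : e = f + q)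
    (dF dQ : ℤ) (g : ℚ) (m : Fin r → ℕ) (hm : ∀ i, 0 < m i) :
    let μF : ℚ := (dF : ℚ) / (f : ℚ)
    let μQ : ℚ := (dQ : ℚ) / (q : ℚ)
    let μE : ℚ := ((dF : ℚ) + (dQ : ℚ)) / (e : ℚ)
    let H : Polynomial ℚ :=
      C (1 / ((e - 1).factorial : ℚ)) *
        (∏ j ∈ Finset.range (e - 1), (X + C ((j : ℚ) + 1))) *
        (-(C μE) * X + C (1 - g))
    let B : ℕ → Polynomial ℚ := fun n =>
      C (1 / (n.factorial : ℚ)) * ∏ j ∈ Finset.range n, (X + C ((e : ℚ) - 1 - (j : ℚ)))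
    let T : Polynomial ℚ :=
      C ((f : ℚ) * ((f : ℚ) + 1) * μF + (f : ℚ) * (q : ℚ) * μQ) * B (e + 1)
        + C ((μF - (1 - g)) * (f : ℚ)) * B e
    let TrX : Polynomial ℚ :=
      ∑ S : Finset (Fin r), (-1 : Polynomial ℚ) ^ S.card *
        (T.comp (X - C ((∑ i ∈ S, m i : ℕ) : ℚ))
          - C ((∑ i ∈ S, m i : ℕ) : ℚ) * H.comp (X - C ((∑ i ∈ S, m i : ℕ) : ℚ)))
    TrX.degree ≤ ((e - r + 1 : ℕ) : WithBot ℕ) ∧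
    TrX.coeff (e - r + 1)
      = (∏ i, (m i : ℚ)) * ((dF : ℚ) + ((f : ℚ) - (r : ℚ)) * ((dF : ℚ) + (dQ : ℚ)))
          / ((e + 1 - r).factorial : ℚ) :=
  complete_intersection_weight_leading_coeff_general f q r hf hq hre e he dF dQ g m
end
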